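/- Let T > 0, C > 0, let g : [0,T] → [0,∞) be integrable, and let f : [0,T] → ℝ be absolutely continuous with f(t) ≥ e for all t ∈ [0,T] and f'(t) ≤ C g(t) f(t) log f(t) + C g(t) f(t) + C g(t) for almost every t ∈ (0,T). Then f(T) ≤ exp( (1 + log f(0)) · exp(2C ∫₀^T g(s) ds) ). -/

import Mathlib

/-!
Since `f ≥ e ≥ 1`, dividing the differential inequality by `f` gives
`(1 + log f)' ≤ 2 C g (1 + log f)` almost everywhere. The function `1 + log f` is absolutely
continuous, so the linear Gronwall inequality applies to it: multiplying by `exp (-∫₀ᵗ 2 C g)`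
produces an absolutely continuous function with a.e. nonpositive derivative, which is therefore
nonincreasing by the fundamental theorem of calculus.
-/

open MeasureTheory Set Filter Real

namespace AbsolutelyContinuousOnInterval

variable {X : Type*} [PseudoMetricSpace X] {a b : ℝ}

theorem congr {f g : ℝ → X} (hf : AbsolutelyContinuousOnInterval f a b)
    (hfg : EqOn f g (uIcc a b)) : AbsolutelyContinuousOnInterval g a b := by
  refine hf.congr' ?_
  filter_upwards [mem_inf_of_right (mem_principal_self _)] with E hE
  exact Finset.sum_congr rfl fun i hi => by rw [hfg (hE.1 i hi).1, hfg (hE.1 i hi).2]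

theorem _root_.LipschitzOnWith.comp_absolutelyContinuousOnInterval {Y : Type*}
    [PseudoMetricSpace Y] {φ : X → Y} {K : NNReal} {s : Set X} {f : ℝ → X}
    (hφ : LipschitzOnWith K φ s) (hf : AbsolutelyContinuousOnInterval f a b)
    (hfs : MapsTo f (uIcc a b) s) : AbsolutelyContinuousOnInterval (φ ∘ f) a b := by
  have hbound : Tendsto (fun E : ℕ × (ℕ → ℝ × ℝ) =>
      (K : ℝ) * ∑ i ∈ Finset.range E.1, dist (f (E.2 i).1) (f (E.2 i).2))
      (totalLengthFilter ⊓ 𝓟 (disjWithin a b)) (nhds 0) :=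
    mul_zero (K : ℝ) ▸ Tendsto.const_mul (K : ℝ) hf
  refine squeeze_zero' (Eventually.of_forall fun E => Finset.sum_nonneg fun i _ => dist_nonneg)
    ?_ hbound
  filter_upwards [mem_inf_of_right (mem_principal_self _)] with E hE
  rw [Finset.mul_sum]
  gcongr with i hi
  exact hφ.dist_le_mul _ (hfs (hE.1 i hi).1) _ (hfs (hE.1 i hi).2)

theorem comp_of_contDiffOn {φ f : ℝ → ℝ} {s : Set ℝ}
    (hf : AbsolutelyContinuousOnInterval f a b) (hφ : ContDiffOn ℝ 1 φ s)
    (hfs : MapsTo f (uIcc a b) s) : AbsolutelyContinuousOnInterval (φ ∘ f) a b := by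
  have himage_compact : IsCompact (f '' uIcc a b) :=
    isCompact_uIcc.image_of_continuousOn hf.continuousOn
  have himage_convex : Convex ℝ (f '' uIcc a b) :=
    (isPreconnected_uIcc.image f hf.continuousOn).convex
  obtain ⟨K, hK⟩ := (hφ.mono (image_subset_iff.2 hfs)).exists_lipschitzOnWith one_ne_zero
    himage_convex himage_compact
  exact hK.comp_absolutelyContinuousOnInterval hf (mapsTo_image f _)

theorem le_mul_exp_integral_of_ae_deriv_le {u k : ℝ → ℝ} (hab : a ≤ b)
    (hu : AbsolutelyContinuousOnInterval u a b) (hk : IntervalIntegrable k volume a b)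
    (hderiv : ∀ᵐ t ∂volume.restrict (Ioo a b), deriv u t ≤ k t * u t) :
    u b ≤ u a * exp (∫ t in a..b, k t) := by
  set K : ℝ → ℝ := fun x => ∫ t in a..x, k t
  have hK : AbsolutelyContinuousOnInterval K a b :=
    hk.absolutelyContinuousOnInterval_intervalIntegral left_mem_uIcc
  have hE : AbsolutelyContinuousOnInterval (exp ∘ (-K)) a b :=
    hK.neg.comp_of_contDiffOn contDiff_exp.contDiffOn (mapsTo_univ _ _)
  have hw : AbsolutelyContinuousOnInterval (u * (exp ∘ (-K))) a b := hu.mul hE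
  have hw_deriv : ∀ᵐ t ∂volume.restrict (Ioc a b), deriv (u * (exp ∘ (-K))) t ≤ 0 := by
    rw [← Measure.restrict_congr_set Ioo_ae_eq_Ioc]
    filter_upwards [hderiv, ae_restrict_of_ae hu.ae_differentiableAt,
      ae_restrict_of_ae hk.ae_hasDerivAt_integral, ae_restrict_mem measurableSet_Ioo]
      with t hut hu_diff hK_deriv ht
    have htab : t ∈ uIcc a b := by rw [uIcc_of_le hab]; exact Ioo_subset_Icc_self ht
    have hw_hasDeriv : HasDerivAt (u * (exp ∘ (-K)))
        (deriv u t * exp (-K t) + u t * (exp (-K t) * -k t)) t :=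
      (hu_diff htab).hasDerivAt.mul (hK_deriv htab a left_mem_uIcc).neg.exp
    rw [hw_hasDeriv.deriv]
    calc deriv u t * exp (-K t) + u t * (exp (-K t) * -k t)
        = exp (-K t) * (deriv u t - k t * u t) := by ring
      _ ≤ 0 := mul_nonpos_of_nonneg_of_nonpos (exp_pos _).le (by linarith)
  have hmono : u b * exp (-K b) ≤ u a := by
    have hint := hw.integral_deriv_eq_sub
    rw [intervalIntegral.integral_of_le hab] at hint
    have := setIntegral_nonpos_of_ae_restrict hw_deriv
    simp only [K, Pi.mul_apply, Function.comp_apply, Pi.neg_apply, intervalIntegral.integral_same,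
      neg_zero, exp_zero, mul_one] at hint this ⊢
    linarith
  calc u b = u b * exp (-K b) * exp (K b) := by
        rw [mul_assoc, ← exp_add, neg_add_cancel, exp_zero, mul_one]
    _ ≤ u a * exp (K b) := mul_le_mul_of_nonneg_right hmono (exp_pos _).le

end AbsolutelyContinuousOnInterval

section Primitive

variable {f f' : ℝ → ℝ} {a b : ℝ}

theorem IntervalIntegrable.absolutelyContinuousOnInterval_of_eq_add_integral
    (hf' : IntervalIntegrable f' volume a b)
    (hf : ∀ t ∈ uIcc a b, f t = f a + ∫ s in a..t, f' s) :
    AbsolutelyContinuousOnInterval f a b :=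
  ((LipschitzWith.const (f a)).lipschitzOnWith.absolutelyContinuousOnInterval.add
    (hf'.absolutelyContinuousOnInterval_intervalIntegral left_mem_uIcc)).congr
    fun t ht => (hf t ht).symm

theorem IntervalIntegrable.ae_hasDerivAt_of_eq_add_integral
    (hf' : IntervalIntegrable f' volume a b)
    (hf : ∀ t ∈ uIcc a b, f t = f a + ∫ s in a..t, f' s) :
    ∀ᵐ t ∂volume.restrict (Ioo a b), HasDerivAt f (f' t) t := by
  filter_upwards [ae_restrict_of_ae hf'.ae_hasDerivAt_integral, ae_restrict_mem measurableSet_Ioo]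
    with t hprim ht
  exact ((hprim (Icc_subset_uIcc (Ioo_subset_Icc_self ht)) a left_mem_uIcc).const_add
    (f a)).congr_of_eventuallyEq
    (eventually_of_mem (Icc_mem_nhds ht.1 ht.2) fun s hs => hf s (Icc_subset_uIcc hs))

end Primitive

theorem div_le_two_mul_one_add_log {c x y : ℝ} (hc : 0 ≤ c) (hx : 1 ≤ x)
    (hy : y ≤ c * x * log x + c * x + c) : y / x ≤ 2 * c * (1 + log x) := by
  have hlog : 0 ≤ log x := log_nonneg hx
  rw [div_le_iff₀ (by linarith)]
  nlinarith [mul_nonneg hc (mul_nonneg (by linarith : (0:ℝ) ≤ x) hlog)]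

/-- Logarithmic Gronwall inequality: if `f ≥ e` is absolutely continuous on `[0,T]`
(expressed via the fundamental theorem of calculus with an integrable a.e. derivative `f'`)
and `f' ≤ C g f log f + C g f + C g` a.e. with `g ≥ 0` integrable, then
`f(T) ≤ exp((1 + log f(0)) · exp(2C ∫₀^T g))`. -/
theorem log_gronwall
    (T C : ℝ) (hT : 0 < T) (hC : 0 < C)
    (g : ℝ → ℝ) (hg : IntegrableOn g (Icc 0 T))
    (hgpos : ∀ t ∈ Icc (0:ℝ) T, 0 ≤ g t)
    (f f' : ℝ → ℝ)
    (hfe : ∀ t ∈ Icc (0:ℝ) T, Real.exp 1 ≤ f t)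
    (hf'int : IntegrableOn f' (Icc 0 T))
    -- absolute continuity: `f(t) = f(0) + ∫₀ᵗ f'`
    (hftc : ∀ t ∈ Icc (0:ℝ) T, f t = f 0 + ∫ s in (0:ℝ)..t, f' s)
    -- the differential inequality, a.e. on `(0,T)`
    (hineq : ∀ᵐ t ∂(volume.restrict (Ioo (0:ℝ) T)),
      f' t ≤ C * g t * f t * Real.log (f t) + C * g t * f t + C * g t) :
    f T ≤ Real.exp ((1 + Real.log (f 0)) * Real.exp (2 * C * ∫ s in (0:ℝ)..T, g s)) := by
  have hT0 : 0 ≤ T := hT.le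
  have hf'i : IntervalIntegrable f' volume 0 T :=
    (intervalIntegrable_iff_integrableOn_Icc_of_le hT0).2 hf'int
  have hgi : IntervalIntegrable g volume 0 T :=
    (intervalIntegrable_iff_integrableOn_Icc_of_le hT0).2 hg
  have hftc' : ∀ t ∈ uIcc 0 T, f t = f 0 + ∫ s in (0:ℝ)..t, f' s := by
    rwa [uIcc_of_le hT0]
  have hf_one : ∀ t ∈ uIcc 0 T, 1 ≤ f t := by
    rw [uIcc_of_le hT0]
    exact fun t ht => (one_le_exp zero_le_one).trans (hfe t ht)
  have hmaps : MapsTo f (uIcc 0 T) {0}ᶜ := fun t ht => (zero_lt_one.trans_le (hf_one t ht)).ne'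
  set u : ℝ → ℝ := fun t => 1 + log (f t)
  have hu_ac : AbsolutelyContinuousOnInterval u 0 T :=
    (hf'i.absolutelyContinuousOnInterval_of_eq_add_integral hftc').comp_of_contDiffOn
      (φ := fun x => 1 + log x) (contDiffOn_const.add contDiffOn_log) hmaps
  have hu_deriv : ∀ᵐ t ∂volume.restrict (Ioo 0 T), deriv u t ≤ 2 * C * g t * u t := by
    filter_upwards [hineq, hf'i.ae_hasDerivAt_of_eq_add_integral hftc',
      ae_restrict_mem measurableSet_Ioo] with t hineq_t hf_deriv ht
    have htT : t ∈ uIcc 0 T := Icc_subset_uIcc (Ioo_subset_Icc_self ht)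
    rw [((hf_deriv.log (hmaps htT)).const_add 1).deriv]
    exact (div_le_two_mul_one_add_log (mul_nonneg hC.le (hgpos t (Ioo_subset_Icc_self ht)))
      (hf_one t htT) hineq_t).trans_eq (by ring)
  have hgronwall := hu_ac.le_mul_exp_integral_of_ae_deriv_le hT0 (hgi.const_mul (2 * C)) hu_deriv
  rw [intervalIntegral.integral_const_mul] at hgronwall
  calc f T = exp (log (f T)) := (exp_log (zero_lt_one.trans_le (hf_one T right_mem_uIcc))).symm
    _ ≤ exp (u T) := exp_le_exp.2 (by simp only [u]; linarith)
    _ ≤ _ := exp_le_exp.2 hgronwall
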